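/- arXiv:1604.01713 — 4 statements merged into one kernel-verified Lean document; each statement's English description precedes it below -/
import Mathlib

section
/- Let A ∈ ℂ^{n×n}, let 𝒰 be a subspace of ℂⁿ, let 𝒞 = A(𝒰) be its image under A, and let P : ℂⁿ → ℂⁿ be the orthogonal projection onto 𝒞. Let p, m ≥ 1, and for each i = 1,…,p let b^(i), x̂₀^(i) ∈ ℂⁿ with residual r̂^(i) = b^(i) − A x̂₀^(i), and let R̂ ∈ ℂ^{n×p} be the matrix whose i-th column is r̂^(i). Then max over i = 1,…,p of the infimum over s ∈ 𝒰 and t ∈ 𝕂_m((I − P)A, R̂) of ‖b^(i) − A(x̂₀^(i) + t + s)‖₂ is less than or equal to max over i = 1,…,p of the infimum over s ∈ 𝒰 and t ∈ K_m((I − P)A, r̂^(i)) of ‖b^(i) − A(x̂₀^(i) + t + s)‖₂. -/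
open scoped Matrix BigOperators

/-- Euclidean 2-norm of a vector in ℂ^d. -/
noncomputable def cenorm {d : ℕ} (v : Fin d → ℂ) : ℝ :=
  Real.sqrt (∑ i, ‖v i‖ ^ 2)

/-- The standard (conjugate-linear in the first argument) inner product on ℂ^d. -/
noncomputable def cinner {d : ℕ} (v w : Fin d → ℂ) : ℂ :=
  ∑ i, star (v i) * w i

/-- The Krylov subspace K_m(f, u) = span{u, f u, …, f^{m-1} u} of a linear
operator f. -/
noncomputable def krylovE {n : ℕ} (f : (Fin n → ℂ) →ₗ[ℂ] (Fin n → ℂ))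
    (u : Fin n → ℂ) (m : ℕ) : Submodule ℂ (Fin n → ℂ) :=
  Submodule.span ℂ {v | ∃ j < m, v = (f ^ j) u}

/-- The block Krylov subspace 𝕂_m(f, R) of a linear operator f: the span of the
images under f^j, j = 0, …, m-1, of all columns of R. -/
noncomputable def blockKrylovE {n p : ℕ} (f : (Fin n → ℂ) →ₗ[ℂ] (Fin n → ℂ))
    (R : Matrix (Fin n) (Fin p) ℂ) (m : ℕ) : Submodule ℂ (Fin n → ℂ) :=
  Submodule.span ℂ {v | ∃ j < m, ∃ i : Fin p, v = (f ^ j) (Rᵀ i)}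

lemma cenorm_nonneg {d : ℕ} (v : Fin d → ℂ) : 0 ≤ cenorm v := Real.sqrt_nonneg _

lemma krylovE_le_blockKrylovE {n p : ℕ} (f : (Fin n → ℂ) →ₗ[ℂ] (Fin n → ℂ))
    (R : Matrix (Fin n) (Fin p) ℂ) (m : ℕ) (i : Fin p) :
    krylovE f (Rᵀ i) m ≤ blockKrylovE f R m :=
  Submodule.span_mono fun _ ⟨j, hj, hv⟩ => ⟨j, hj, i, hv⟩

lemma ciInf_subtype_le_ciInf_subtype_of_subset {α β : Type*} [ConditionallyCompleteLattice β]
    {S T : Set α} [Nonempty S] (hST : S ⊆ T) (f : α → β) (hf : BddBelow (Set.range fun t : T => f t)) :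
    ⨅ t : T, f t ≤ ⨅ s : S, f s :=
  le_ciInf fun s => ciInf_le hf ⟨s, hST s.2⟩

theorem block_recycled_gmres_max_residual_le_general {n p m : ℕ}
    (A : Matrix (Fin n) (Fin n) ℂ)
    (U : Submodule ℂ (Fin n → ℂ))
    (P : (Fin n → ℂ) →ₗ[ℂ] (Fin n → ℂ))
    (b x₀ : Fin p → (Fin n → ℂ))
    (R : Matrix (Fin n) (Fin p) ℂ)
    (hR : ∀ i : Fin p, Rᵀ i = b i - A.mulVec (x₀ i)) :
    (⨆ i : Fin p, ⨅ s : U,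
        ⨅ t : blockKrylovE ((LinearMap.id - P) ∘ₗ A.mulVecLin) R m,
          cenorm (b i - A.mulVec (x₀ i + (t : Fin n → ℂ) + (s : Fin n → ℂ)))) ≤
      ⨆ i : Fin p, ⨅ s : U,
        ⨅ t : krylovE ((LinearMap.id - P) ∘ₗ A.mulVecLin) (b i - A.mulVec (x₀ i)) m,
          cenorm (b i - A.mulVec (x₀ i + (t : Fin n → ℂ) + (s : Fin n → ℂ))) := by
  refine ciSup_mono (Set.finite_range _).bddAbove fun i => ?_
  refine ciInf_mono ⟨0, ?_⟩ fun s => ?_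
  · rintro _ ⟨s, rfl⟩
    exact Real.iInf_nonneg fun _ => cenorm_nonneg _
  rw [← hR i]
  exact ciInf_subtype_le_ciInf_subtype_of_subset (krylovE_le_blockKrylovE _ R m i)
    (fun t => cenorm (b i - A *ᵥ (x₀ i + t + s))) ⟨0, by rintro _ ⟨t, rfl⟩; exact cenorm_nonneg _⟩

/-- The worst-case (over right-hand sides) minimal residual norm of block
recycled GMRES over 𝒰 + 𝕂_m((I-P)A, R̂) is at most the worst-case minimal
residual norm of single-vector recycled GMRES over 𝒰 + K_m((I-P)A, r̂⁽ⁱ⁾). -/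
theorem block_recycled_gmres_max_residual_le {n p m : ℕ} (hp : 1 ≤ p) (hm : 1 ≤ m)
    (A : Matrix (Fin n) (Fin n) ℂ)
    (U : Submodule ℂ (Fin n → ℂ))
    (P : (Fin n → ℂ) →ₗ[ℂ] (Fin n → ℂ))
    (hPmem : ∀ v : Fin n → ℂ, P v ∈ U.map A.mulVecLin)
    (hPorth : ∀ v : Fin n → ℂ, ∀ c ∈ U.map A.mulVecLin, cinner (v - P v) c = 0)
    (b x₀ : Fin p → (Fin n → ℂ))
    (R : Matrix (Fin n) (Fin p) ℂ)
    (hR : ∀ i : Fin p, Rᵀ i = b i - A.mulVec (x₀ i)) :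
    (⨆ i : Fin p, ⨅ s : U,
        ⨅ t : blockKrylovE ((LinearMap.id - P) ∘ₗ A.mulVecLin) R m,
          cenorm (b i - A.mulVec (x₀ i + (t : Fin n → ℂ) + (s : Fin n → ℂ)))) ≤
      ⨆ i : Fin p, ⨅ s : U,
        ⨅ t : krylovE ((LinearMap.id - P) ∘ₗ A.mulVecLin) (b i - A.mulVec (x₀ i)) m,
          cenorm (b i - A.mulVec (x₀ i + (t : Fin n → ℂ) + (s : Fin n → ℂ))) :=
  block_recycled_gmres_max_residual_le_general A U P b x₀ R hR
end

section
/- Let A ∈ ℂ^{n×n}, let U ∈ ℂ^{n×k}, and set C = A U; assume C has orthonormal columns (C*C = I_k). Let W_m ∈ ℂ^{n×mp}, W_{m+1} ∈ ℂ^{n×(m+1)p}, and H̄_m ∈ ℂ^{(m+1)p×mp} satisfy the projected block Arnoldi relation (I − C C*) A W_m = W_{m+1} H̄_m, and assume the columns of W_{m+1} are orthogonal to the columns of C, i.e. C* W_{m+1} = 0. Set F_m = C* A W_m ∈ ℂ^{k×mp}. Then the block matrix identity A [U W_m] = [C W_{m+1}] · [[I_k, F_m],[0, H̄_m]] holds,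 where [U W_m] and [C W_{m+1}] denote horizontal concatenations and [[I_k, F_m],[0, H̄_m]] is the indicated 2×2 block matrix. -/
open scoped Matrix

namespace Matrix

variable {R : Type*} [Ring R]

theorem eq_mul_mul_add_of_one_sub_mul_mul_eq {ι κ ν : Type*} [Fintype ι] [DecidableEq ι]
    [Fintype κ] {C : Matrix ι κ R} {D : Matrix κ ι R} {X Y : Matrix ι ν R}
    (h : (1 - C * D) * X = Y) : X = C * (D * X) + Y := by
  rw [← h, Matrix.sub_mul, Matrix.one_mul, Matrix.mul_assoc, add_sub_cancel]

theorem mul_fromCols_eq_fromCols_mul_fromBlocks {ι κ μ ν : Type*} [Fintype ι] [Fintype κ]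
    [DecidableEq κ] [Fintype μ] [Fintype ν] {A : Matrix ι ι R} {U C : Matrix ι κ R}
    {W : Matrix ι μ R} {W' : Matrix ι ν R} {F : Matrix κ μ R} {H : Matrix ν μ R}
    (hU : A * U = C) (hW : A * W = C * F + W' * H) :
    A * fromCols U W = fromCols C W' * fromBlocks 1 F 0 H := by
  rw [mul_fromCols, fromCols_mul_fromBlocks, hU, hW, Matrix.mul_one, Matrix.mul_zero, add_zero]

end Matrix

theorem recycled_block_arnoldi_relation_general {n k m p : ℕ}
    (A : Matrix (Fin n) (Fin n) ℂ) (U : Matrix (Fin n) (Fin k) ℂ)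
    (C : Matrix (Fin n) (Fin k) ℂ) (hC : C = A * U)
    (Wm : Matrix (Fin n) (Fin (m * p)) ℂ)
    (Wm1 : Matrix (Fin n) (Fin (m * p + p)) ℂ)
    (Hbar : Matrix (Fin (m * p + p)) (Fin (m * p)) ℂ)
    (hArnoldi : (1 - C * Cᴴ) * A * Wm = Wm1 * Hbar)
    (F : Matrix (Fin k) (Fin (m * p)) ℂ) (hF : F = Cᴴ * (A * Wm)) :
    A * Matrix.fromCols U Wm =
      Matrix.fromCols C Wm1 * Matrix.fromBlocks 1 F 0 Hbar := by
  have hAWm : A * Wm = C * F + Wm1 * Hbar := by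
    rw [hF]
    exact Matrix.eq_mul_mul_add_of_one_sub_mul_mul_eq (by rwa [← Matrix.mul_assoc])
  exact Matrix.mul_fromCols_eq_fromCols_mul_fromBlocks hC.symm hAWm

/-- The block Arnoldi-like relation of recycled block GMRES:
A [U  W_m] = [C  W_{m+1}] [[I, F_m],[0, H̄_m]], where C = AU has orthonormal
columns, the projected block Arnoldi relation (I - C C*) A W_m = W_{m+1} H̄_m
holds, the columns of W_{m+1} are orthogonal to those of C, and
F_m = C* A W_m. -/
theorem recycled_block_arnoldi_relation {n k m p : ℕ}
    (A : Matrix (Fin n) (Fin n) ℂ) (U : Matrix (Fin n) (Fin k) ℂ)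
    (C : Matrix (Fin n) (Fin k) ℂ) (hC : C = A * U)
    (hCorth : Cᴴ * C = 1)
    (Wm : Matrix (Fin n) (Fin (m * p)) ℂ)
    (Wm1 : Matrix (Fin n) (Fin (m * p + p)) ℂ)
    (Hbar : Matrix (Fin (m * p + p)) (Fin (m * p)) ℂ)
    (hArnoldi : (1 - C * Cᴴ) * A * Wm = Wm1 * Hbar)
    (hOrth : Cᴴ * Wm1 = 0)
    (F : Matrix (Fin k) (Fin (m * p)) ℂ) (hF : F = Cᴴ * (A * Wm)) :
    A * Matrix.fromCols U Wm =
      Matrix.fromCols C Wm1 * Matrix.fromBlocks 1 F 0 Hbar :=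
  recycled_block_arnoldi_relation_general A U C hC Wm Wm1 Hbar hArnoldi F hF
end

section
/- Let A ∈ ℂ^{n×n}, let U ∈ ℂ^{n×k}, and set C = A U; assume C has orthonormal columns (C*C = I_k). Let V_{m+1} ∈ ℂ^{n×(m+1)} have orthonormal columns with C* V_{m+1} = 0, let V_m consist of its first m columns, and let H̄_m ∈ ℂ^{(m+1)×m} satisfy (I − C C*) A V_m = V_{m+1} H̄_m. Set F_m = C* A V_m ∈ ℂ^{k×m}. Let b, x̂₀ ∈ ℂⁿ satisfy b − A x̂₀ = β V_{m+1} e₁ for some β ∈ ℝ, where e₁ is the first standard basis vector of ℂ^{m+1}. Then for every y ∈ ℂ^m, ‖b − A(x̂₀ + V_m y − U F_m y)‖₂ = ‖β e₁ − H̄_m y‖₂. Consequently, minimizing the recycled GMRES residual over corrections of the form V_m y − U F_m y is equivalent to solving the GMRES least-squares problem min over y of ‖β e₁ − H̄_m y‖₂. -/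
open scoped Matrix BigOperators

/-- Euclidean 2-norm of a vector in ℂ^d. -/
noncomputable def enorm2 {d : ℕ} (v : Fin d → ℂ) : ℝ :=
  Real.sqrt (∑ i, ‖v i‖ ^ 2)

/-!
Write `W = V_m`. The Arnoldi relation gives `A W = V H̄ + C (C* A W) = V H̄ + C F`, and `A U F = C F`,
so the `C F y` contributions cancel and the residual of the correction `W y - U F y` is
`V (β e₁ - H̄ y)`. Since `V` has orthonormal columns, it preserves the Euclidean norm.
-/

namespace Matrix

variable {ι κ : Type*} [Fintype ι] [Fintype κ]

theorem re_star_dotProduct_self (w : ι → ℂ) : (star w ⬝ᵥ w).re = ∑ i, ‖w i‖ ^ 2 := by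
  rw [dotProduct, Complex.re_sum]
  refine Finset.sum_congr rfl fun i _ => ?_
  rw [Pi.star_apply, RCLike.star_def, mul_comm, Complex.mul_conj, Complex.ofReal_re,
    Complex.normSq_eq_norm_sq]

theorem star_mulVec_dotProduct_mulVec_of_conjTranspose_mul_self [DecidableEq κ] {V : Matrix ι κ ℂ}
    (hV : Vᴴ * V = 1) (z : κ → ℂ) : star (V *ᵥ z) ⬝ᵥ (V *ᵥ z) = star z ⬝ᵥ z := by
  rw [star_mulVec, dotProduct_mulVec, vecMul_vecMul, hV, vecMul_one]

theorem mul_eq_add_of_one_sub_mul_conjTranspose_mul [DecidableEq ι] {μ ν : Type*} [Fintype μ]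
    {C : Matrix ι κ ℂ} {B : Matrix ι ν ℂ} {V : Matrix ι μ ℂ} {H : Matrix μ ν ℂ}
    (h : (1 - C * Cᴴ) * B = V * H) : B = V * H + C * (Cᴴ * B) := by
  rw [← h, Matrix.sub_mul, Matrix.one_mul, Matrix.mul_assoc, sub_add_cancel]

end Matrix

open Matrix

theorem enorm2_mulVec_of_conjTranspose_mul_self {n d : ℕ} {V : Matrix (Fin n) (Fin d) ℂ}
    (hV : Vᴴ * V = 1) (z : Fin d → ℂ) : enorm2 (V *ᵥ z) = enorm2 z := by
  simp only [enorm2, ← re_star_dotProduct_self, star_mulVec_dotProduct_mulVec_of_conjTranspose_mul_self hV]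

theorem residual_recycled_correction {ι κ μ ν : Type*} [Fintype ι] [Fintype κ] [Fintype μ]
    [Fintype ν] {A : Matrix ι ι ℂ} {U C : Matrix ι κ ℂ} {W : Matrix ι ν ℂ} {V : Matrix ι μ ℂ}
    {H : Matrix μ ν ℂ} {F : Matrix κ ν ℂ} {b x₀ : ι → ℂ} {r₀ : μ → ℂ}
    (hC : C = A * U) (hAW : A * W = V * H + C * F) (hres : b - A *ᵥ x₀ = V *ᵥ r₀)
    (y : ν → ℂ) : b - A *ᵥ (x₀ + W *ᵥ y - U *ᵥ (F *ᵥ y)) = V *ᵥ (r₀ - H *ᵥ y) := by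
  have hAWy : A *ᵥ (W *ᵥ y) = V *ᵥ (H *ᵥ y) + C *ᵥ (F *ᵥ y) := by
    rw [mulVec_mulVec, hAW, add_mulVec, mulVec_mulVec, mulVec_mulVec]
  have hAU : A *ᵥ (U *ᵥ (F *ᵥ y)) = C *ᵥ (F *ᵥ y) := by
    rw [hC, mulVec_mulVec]
  rw [mulVec_sub, mulVec_add, hAWy, hAU, mulVec_sub, ← hres]
  abel

theorem recycled_gmres_least_squares_general {n k m : ℕ}
    (A : Matrix (Fin n) (Fin n) ℂ) (U : Matrix (Fin n) (Fin k) ℂ)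
    (C : Matrix (Fin n) (Fin k) ℂ) (hC : C = A * U)
    (V : Matrix (Fin n) (Fin (m + 1)) ℂ)
    (hVorth : Vᴴ * V = 1)
    (Hbar : Matrix (Fin (m + 1)) (Fin m) ℂ)
    (hArnoldi : (1 - C * Cᴴ) * A * V.submatrix id Fin.castSucc = V * Hbar)
    (F : Matrix (Fin k) (Fin m) ℂ)
    (hF : F = Cᴴ * (A * V.submatrix id Fin.castSucc))
    (b x₀ : Fin n → ℂ) (β : ℝ)
    (hres : b - A.mulVec x₀ = (β : ℂ) • V.mulVec (Pi.single 0 1)) :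
    ∀ y : Fin m → ℂ,
      enorm2 (b - A.mulVec
          (x₀ + (V.submatrix id Fin.castSucc).mulVec y - U.mulVec (F.mulVec y))) =
        enorm2 ((β : ℂ) • (Pi.single (0 : Fin (m + 1)) (1 : ℂ) : Fin (m + 1) → ℂ) - Hbar.mulVec y) := by
  intro y
  have hAW : A * V.submatrix id Fin.castSucc = V * Hbar + C * F := by
    rw [hF]
    exact mul_eq_add_of_one_sub_mul_conjTranspose_mul (by rwa [← Matrix.mul_assoc])
  rw [← mulVec_smul] at hres
  rw [residual_recycled_correction hC hAW hres, enorm2_mulVec_of_conjTranspose_mul_self hVorth]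

/-- For recycled GMRES, the residual norm of the full problem for the
correction V_m y - U F_m y equals the reduced least-squares residual norm
‖β e₁ - H̄_m y‖₂, so minimizing the recycled GMRES residual is equivalent to
the GMRES least-squares problem. -/
theorem recycled_gmres_least_squares {n k m : ℕ}
    (A : Matrix (Fin n) (Fin n) ℂ) (U : Matrix (Fin n) (Fin k) ℂ)
    (C : Matrix (Fin n) (Fin k) ℂ) (hC : C = A * U)
    (hCorth : Cᴴ * C = 1)
    (V : Matrix (Fin n) (Fin (m + 1)) ℂ)
    (hVorth : Vᴴ * V = 1) (hCV : Cᴴ * V = 0)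
    (Hbar : Matrix (Fin (m + 1)) (Fin m) ℂ)
    (hArnoldi : (1 - C * Cᴴ) * A * V.submatrix id Fin.castSucc = V * Hbar)
    (F : Matrix (Fin k) (Fin m) ℂ)
    (hF : F = Cᴴ * (A * V.submatrix id Fin.castSucc))
    (b x₀ : Fin n → ℂ) (β : ℝ)
    (hres : b - A.mulVec x₀ = (β : ℂ) • V.mulVec (Pi.single 0 1)) :
    ∀ y : Fin m → ℂ,
      enorm2 (b - A.mulVec
          (x₀ + (V.submatrix id Fin.castSucc).mulVec y - U.mulVec (F.mulVec y))) =
        enorm2 ((β : ℂ) • (Pi.single (0 : Fin (m + 1)) (1 : ℂ) : Fin (m + 1) → ℂ) - Hbar.mulVec y) :=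
  recycled_gmres_least_squares_general A U C hC V hVorth Hbar hArnoldi F hF b x₀ β hres
end

section
/- Let A ∈ ℂ^{n×n}, let U ∈ ℂ^{n×k}, and set C = A U; assume C has orthonormal columns (C*C = I_k). Define P = C C* and Q = U C* A. Let 𝒦 be a subspace of ℂⁿ, let b, x̂₀ ∈ ℂⁿ with r̂₀ = b − A x̂₀ satisfying C* r̂₀ = 0, and suppose t̂ ∈ 𝒦 minimizes ‖r̂₀ − (I − P) A t‖₂ over t ∈ 𝒦. Then the approximation x = x̂₀ + t̂ − Q t̂ satisfies the minimum residual Petrov–Galerkin condition: b − A x is orthogonal to A(u + s) for every u in the column span of U and every s ∈ 𝒦, i.e., b − A x ⊥ A(𝒰 + 𝒦) where 𝒰 is the column span of U. -/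
open scoped Matrix BigOperators

/-- Euclidean 2-norm of a vector in ℂ^d. -/
noncomputable def enorm {d : ℕ} (v : Fin d → ℂ) : ℝ :=
  Real.sqrt (∑ i, ‖v i‖ ^ 2)

/-!
Write `r₀ = b - A x̂₀` and `P = C C*`. Since `A U = C`, the residual of `x = x̂₀ + t̂ - Q t̂` is
`r = r₀ - (I - P) A t̂`. Minimality of `t̂` makes `r` orthogonal to `(I - P) A 𝒦`, and
`C* r = C* r₀ - C* (I - P) A t̂ = 0` makes it orthogonal to the range of `C`; every vector
`A (U y + s)` is `(I - P) A s + C (y + C* A s)`.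
-/

open scoped InnerProductSpace

theorem Submodule.inner_sub_eq_zero_of_forall_norm_sub_le {𝕜 E : Type*} [RCLike 𝕜]
    [NormedAddCommGroup E] [InnerProductSpace 𝕜 E] (M : Submodule 𝕜 E) {u v : E} (hv : v ∈ M)
    (h : ∀ w ∈ M, ‖u - v‖ ≤ ‖u - w‖) : ∀ w ∈ M, ⟪u - v, w⟫_𝕜 = 0 := by
  rw [← M.norm_eq_iInf_iff_inner_eq_zero hv]
  refine le_antisymm (le_ciInf fun w => h w w.2) ?_
  exact ciInf_le ⟨0, by rintro x ⟨w, rfl⟩; positivity⟩ (⟨v, hv⟩ : M)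

theorem LinearMap.inner_sub_apply_eq_zero_of_forall_norm_sub_le {𝕜 E F : Type*} [RCLike 𝕜]
    [AddCommGroup E] [Module 𝕜 E] [NormedAddCommGroup F] [InnerProductSpace 𝕜 F]
    (L : E →ₗ[𝕜] F) (K : Submodule 𝕜 E) {u : F} {t₀ : E} (ht₀ : t₀ ∈ K)
    (h : ∀ t ∈ K, ‖u - L t₀‖ ≤ ‖u - L t‖) : ∀ t ∈ K, ⟪u - L t₀, L t⟫_𝕜 = 0 := by
  intro t ht
  refine (K.map L).inner_sub_eq_zero_of_forall_norm_sub_le ⟨t₀, ht₀, rfl⟩ ?_ _ ⟨t, ht, rfl⟩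
  rintro _ ⟨t', ht', rfl⟩
  exact h t' ht'

section Coordinates

variable {d : ℕ}

theorem enorm_eq_norm_toLp (v : Fin d → ℂ) : _root_.enorm v = ‖WithLp.toLp 2 v‖ := by
  simp [_root_.enorm, EuclideanSpace.norm_eq]

theorem cinner_eq_inner_toLp (v w : Fin d → ℂ) :
    cinner v w = ⟪WithLp.toLp 2 v, WithLp.toLp 2 w⟫_ℂ := by
  simp [cinner, PiLp.inner_apply, mul_comm]

theorem cinner_eq_dotProduct (v w : Fin d → ℂ) : cinner v w = star v ⬝ᵥ w := by
  simp [cinner, dotProduct]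

theorem cinner_add_right (v w w' : Fin d → ℂ) : cinner v (w + w') = cinner v w + cinner v w' := by
  simp only [cinner_eq_dotProduct, dotProduct_add]

theorem cinner_zero_left (w : Fin d → ℂ) : cinner 0 w = 0 := by
  simp only [cinner_eq_dotProduct, star_zero, zero_dotProduct]

theorem cinner_mulVec_right {k : ℕ} (v : Fin d → ℂ) (M : Matrix (Fin d) (Fin k) ℂ)
    (w : Fin k → ℂ) : cinner v (M *ᵥ w) = cinner (Mᴴ *ᵥ v) w := by
  rw [cinner_eq_dotProduct, cinner_eq_dotProduct, Matrix.dotProduct_mulVec, Matrix.star_mulVec,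
    Matrix.conjTranspose_conjTranspose]

theorem cinner_mulVec_eq_zero_of_forall_enorm_sub_le {ι : Type*} [Fintype ι]
    (M : Matrix (Fin d) ι ℂ) (K : Submodule ℂ (ι → ℂ)) {r : Fin d → ℂ} {t₀ : ι → ℂ}
    (ht₀ : t₀ ∈ K) (h : ∀ t ∈ K, _root_.enorm (r - M *ᵥ t₀) ≤ _root_.enorm (r - M *ᵥ t)) :
    ∀ t ∈ K, cinner (r - M *ᵥ t₀) (M *ᵥ t) = 0 := by
  let L : (ι → ℂ) →ₗ[ℂ] EuclideanSpace ℂ (Fin d) :=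
    (WithLp.linearEquiv 2 ℂ (Fin d → ℂ)).symm.toLinearMap ∘ₗ M.mulVecLin
  have hL : ∀ t, L t = WithLp.toLp 2 (M *ᵥ t) := fun _ => rfl
  intro t ht
  have := L.inner_sub_apply_eq_zero_of_forall_norm_sub_le K (u := WithLp.toLp 2 r) ht₀
    (fun t' ht' => by simpa only [hL, enorm_eq_norm_toLp, WithLp.toLp_sub] using h t' ht') t ht
  rwa [hL, hL, ← WithLp.toLp_sub, ← cinner_eq_inner_toLp] at this

end Coordinates

section Recycling

variable {R m p : Type*} [Ring R] [StarRing R] [Fintype m] [DecidableEq m] [Fintype p]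
  {A : Matrix m m R} {U C : Matrix m p R}

theorem Matrix.conjTranspose_mul_one_sub_mul_conjTranspose [DecidableEq p] (hC : Cᴴ * C = 1) :
    Cᴴ * (1 - C * Cᴴ) = 0 := by
  rw [Matrix.mul_sub, Matrix.mul_one, ← Matrix.mul_assoc, hC, Matrix.one_mul, sub_self]

theorem Matrix.sub_mulVec_add_sub_of_eq_mul (hC : C = A * U) (b x₀ t : m → R) :
    b - A *ᵥ (x₀ + t - (U * (Cᴴ * A)) *ᵥ t) = (b - A *ᵥ x₀) - ((1 - C * Cᴴ) * A) *ᵥ t := by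
  have hAQ : A * (U * (Cᴴ * A)) = C * Cᴴ * A := by simp only [hC, Matrix.mul_assoc]
  simp only [Matrix.mulVec_add, Matrix.mulVec_sub, Matrix.sub_mul, Matrix.one_mul,
    Matrix.sub_mulVec, Matrix.mulVec_mulVec, hAQ]
  abel

theorem Matrix.mulVec_mulVec_add_eq_of_eq_mul (hC : C = A * U) (y : p → R) (s : m → R) :
    A *ᵥ (U *ᵥ y + s) = ((1 - C * Cᴴ) * A) *ᵥ s + C *ᵥ (y + (Cᴴ * A) *ᵥ s) := by
  rw [Matrix.mulVec_add, Matrix.mulVec_add, Matrix.mulVec_mulVec, ← hC, Matrix.mulVec_mulVec,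
    Matrix.sub_mul, Matrix.one_mul, Matrix.sub_mulVec, ← Matrix.mul_assoc]
  abel

end Recycling

/-- If t̂ ∈ 𝒦 minimizes the projected residual ‖r̂₀ - (I - C C*) A t‖₂ over 𝒦,
then the recycled GMRES approximation x = x̂₀ + t̂ - Q t̂ (with Q = U C* A)
satisfies the minimum-residual Petrov–Galerkin condition
b - A x ⊥ A(𝒰 + 𝒦), where 𝒰 is the column span of U. -/
theorem recycled_gmres_petrov_galerkin {n k : ℕ}
    (A : Matrix (Fin n) (Fin n) ℂ) (U : Matrix (Fin n) (Fin k) ℂ)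
    (C : Matrix (Fin n) (Fin k) ℂ) (hC : C = A * U)
    (hCorth : Cᴴ * C = 1)
    (K : Submodule ℂ (Fin n → ℂ))
    (b x₀ : Fin n → ℂ)
    (hr₀ : Cᴴ.mulVec (b - A.mulVec x₀) = 0)
    (th : Fin n → ℂ) (hth : th ∈ K)
    (hmin : ∀ t ∈ K,
      _root_.enorm ((b - A.mulVec x₀) - ((1 - C * Cᴴ) * A).mulVec th) ≤
        _root_.enorm ((b - A.mulVec x₀) - ((1 - C * Cᴴ) * A).mulVec t)) :
    ∀ u ∈ LinearMap.range U.mulVecLin, ∀ s ∈ K,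
      cinner (b - A.mulVec (x₀ + th - (U * (Cᴴ * A)).mulVec th))
        (A.mulVec (u + s)) = 0 := by
  rintro _ ⟨y, rfl⟩ s hs
  set r := (b - A *ᵥ x₀) - ((1 - C * Cᴴ) * A) *ᵥ th
  have hCr : Cᴴ *ᵥ r = 0 := by
    rw [Matrix.mulVec_sub, hr₀, Matrix.mulVec_mulVec, ← Matrix.mul_assoc,
      Matrix.conjTranspose_mul_one_sub_mul_conjTranspose hCorth, Matrix.zero_mul,
      Matrix.zero_mulVec, sub_zero]
  have hKr : cinner r (((1 - C * Cᴴ) * A) *ᵥ s) = 0 :=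
    cinner_mulVec_eq_zero_of_forall_enorm_sub_le _ K hth hmin s hs
  rw [Matrix.sub_mulVec_add_sub_of_eq_mul hC, Matrix.mulVecLin_apply,
    Matrix.mulVec_mulVec_add_eq_of_eq_mul hC, cinner_add_right, hKr, cinner_mulVec_right, hCr,
    cinner_zero_left, add_zero]
end
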